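/- arXiv:math/0606160 — 2 statements merged into one kernel-verified Lean document; each statement's English description precedes it below -/
import Mathlib

section
/- The map h ↦ (x_+(h), u_+(h)) is a one-to-one map of the interval (0,m) onto 𝒢_+, and its inverse is the map 𝒢_+ ∋ (x,u) ↦ h_+(x,u) := G(x−) + u·(G(x) − G(x−)) ∈ (0,m). Similarly, the map h ↦ (x_−(h), u_−(h)) is a one-to-one map of (0,m) onto 𝒢_−, with inverse 𝒢_− ∋ (x,u) ↦ h_−(x,u) := G(x+) + u·(G(x) − G(x+)) ∈ (0,m). -/
open MeasureTheory ProbabilityTheory Set Filter Function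
open scoped ENNReal NNReal Topology

noncomputable section

namespace PinelisTtest

variable {Ω : Type*} [MeasurableSpace Ω]

/-- The function `G` from the paper: `G x = E[X 1{X ∈ (0,x]}]` for `x ≥ 0`,
`G x = E[(-X) 1{X ∈ [x,0)}]` for `x < 0`. -/
def G (P : Measure Ω) (X : Ω → ℝ) (x : ℝ) : ℝ :=
  if 0 ≤ x then ∫ ω, (if X ω ∈ Set.Ioc (0:ℝ) x then X ω else 0) ∂P
  else ∫ ω, (if X ω ∈ Set.Ico x (0:ℝ) then -(X ω) else 0) ∂P

/-- `m := (1/2) E|X|`. -/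
def mHalf (P : Measure Ω) (X : Ω → ℝ) : ℝ := (1/2) * ∫ ω, |X ω| ∂P

/-- `G` extended to `[-∞,∞]`, with `G(±∞) = m`. -/
def Gbar (P : Measure Ω) (X : Ω → ℝ) (x : EReal) : ℝ :=
  if x = ⊤ ∨ x = ⊥ then mHalf P X else G P X x.toReal

/-- `x_+(h) := inf {x ∈ [0,∞] : G(x) ≥ h}`. -/
def xPlus (P : Measure Ω) (X : Ω → ℝ) (h : ℝ) : EReal :=
  sInf {x : EReal | 0 ≤ x ∧ h ≤ Gbar P X x}

/-- `x_-(h) := sup {x ∈ [-∞,0] : G(x) ≥ h}`. -/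
def xMinus (P : Measure Ω) (X : Ω → ℝ) (h : ℝ) : EReal :=
  sSup {x : EReal | x ≤ 0 ∧ h ≤ Gbar P X x}

/-- `w(h) := x_+(h) - x_-(h)`. -/
def wFun (P : Measure Ω) (X : Ω → ℝ) (h : ℝ) : EReal := xPlus P X h - xMinus P X h

/-- `V := {w(h) : h ∈ (0,m]}`. -/
def V (P : Measure Ω) (X : Ω → ℝ) : Set EReal := wFun P X '' Set.Ioc 0 (mHalf P X)

/-- `h_+(x,u) := G(x-) + u (G(x) - G(x-))`. -/
def hPlus (P : Measure Ω) (X : Ω → ℝ) (x u : ℝ) : ℝ :=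
  leftLim (G P X) x + u * (G P X x - leftLim (G P X) x)

/-- `h_-(x,u) := G(x+) + u (G(x) - G(x+))`. -/
def hMinus (P : Measure Ω) (X : Ω → ℝ) (x u : ℝ) : ℝ :=
  rightLim (G P X) x + u * (G P X x - rightLim (G P X) x)

/-- `H(x,u)`. -/
def H (P : Measure Ω) (X : Ω → ℝ) (x u : ℝ) : ℝ :=
  if 0 ≤ x then hPlus P X x u else hMinus P X x u

/-- The reciprocating function `r(x,u)` (real-valued; the extended value is converted
by `EReal.toReal`, which only matters off the almost-sure good set). -/
def recip (P : Measure Ω) (X : Ω → ℝ) (x u : ℝ) : ℝ :=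
  if 0 ≤ x then (xMinus P X (H P X x u)).toReal else (xPlus P X (H P X x u)).toReal

/-- `U_X(ω) := U(ω)` if `P(X = X(ω)) ≠ 0`, and `:= 1` otherwise. -/
def UX (P : Measure Ω) (X U : Ω → ℝ) (ω : Ω) : ℝ :=
  if P {ω' | X ω' = X ω} ≠ 0 then U ω else 1

/-- `W := |X - r(X, U_X)|`. -/
def W (P : Measure Ω) (X U : Ω → ℝ) (ω : Ω) : ℝ :=
  |X ω - recip P X (X ω) (UX P X U ω)|

/-- `Y := |X ⬝ r(X, U_X)|`. -/
def Yf (P : Measure Ω) (X U : Ω → ℝ) (ω : Ω) : ℝ :=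
  |X ω * recip P X (X ω) (UX P X U ω)|

/-- `U` is uniformly distributed on `[0,1]`. -/
def IsUniform01 (P : Measure Ω) (U : Ω → ℝ) : Prop :=
  P.map U = volume.restrict (Set.Icc (0:ℝ) 1)

/-- `M_+`. -/
def Mplus (P : Measure Ω) (X : Ω → ℝ) : Set ℝ :=
  {x | 0 < x ∧ ∀ y < x, 0 < P {ω | X ω ∈ Set.Ioc y x}}

/-- `N_+`. -/
def Nplus (P : Measure Ω) (X : Ω → ℝ) : Set ℝ :=
  {x | 0 < x ∧ P {ω | X ω = x} = 0}

/-- `L_+`. -/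
def Lplus (P : Measure Ω) (X : Ω → ℝ) : Set ℝ :=
  {x | 0 < x ∧ ∃ y, 0 ≤ y ∧ y < x ∧ P {ω | X ω ∈ Set.Ioo y x} = 0}

/-- `M_-`. -/
def Mminus (P : Measure Ω) (X : Ω → ℝ) : Set ℝ :=
  {x | x < 0 ∧ ∀ y, x < y → 0 < P {ω | X ω ∈ Set.Ico x y}}

/-- `N_-`. -/
def Nminus (P : Measure Ω) (X : Ω → ℝ) : Set ℝ :=
  {x | x < 0 ∧ P {ω | X ω = x} = 0}

/-- `L_-`. -/
def Lminus (P : Measure Ω) (X : Ω → ℝ) : Set ℝ :=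
  {x | x < 0 ∧ ∃ y, x < y ∧ y ≤ 0 ∧ P {ω | X ω ∈ Set.Ioo x y} = 0}

/-- `𝒢_+`. -/
def Gplus (P : Measure Ω) (X : Ω → ℝ) : Set (ℝ × ℝ) :=
  {p | p.1 ∈ Mplus P X ∧ 0 ≤ p.2 ∧ p.2 ≤ 1 ∧
    (p.1 ∈ Nplus P X → p.2 = 1) ∧ (p.1 ∈ Lplus P X → 0 < p.2) ∧
    (P {ω | p.1 < X ω} = 0 → p.1 ∉ Nplus P X ∧ p.2 < 1)}

/-- `𝒢_-`. -/
def Gminus (P : Measure Ω) (X : Ω → ℝ) : Set (ℝ × ℝ) :=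
  {p | p.1 ∈ Mminus P X ∧ 0 ≤ p.2 ∧ p.2 ≤ 1 ∧
    (p.1 ∈ Nminus P X → p.2 = 1) ∧ (p.1 ∈ Lminus P X → 0 < p.2) ∧
    (P {ω | X ω < p.1} = 0 → p.1 ∉ Nminus P X ∧ p.2 < 1)}

/-- `𝒢 := 𝒢_+ ∪ 𝒢_-`. -/
def Gset (P : Measure Ω) (X : Ω → ℝ) : Set (ℝ × ℝ) := Gplus P X ∪ Gminus P X


open scoped Classical in
/-- `u_+(h)`. -/
def uPlus (P : Measure Ω) (X : Ω → ℝ) (h : ℝ) : ℝ :=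
  if (xPlus P X h).toReal ∈ Nplus P X then 1
  else (h - leftLim (G P X) (xPlus P X h).toReal)
      / (G P X (xPlus P X h).toReal - leftLim (G P X) (xPlus P X h).toReal)

open scoped Classical in
/-- `u_-(h)`. -/
def uMinus (P : Measure Ω) (X : Ω → ℝ) (h : ℝ) : ℝ :=
  if (xMinus P X h).toReal ∈ Nminus P X then 1
  else (h - rightLim (G P X) (xMinus P X h).toReal)
      / (G P X (xMinus P X h).toReal - rightLim (G P X) (xMinus P X h).toReal)

/-!
On `[0, ∞)`, `G x = E[X; 0 < X ≤ x]` is nondecreasing and right-continuous, with left limit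
`G(x-) = E[X; 0 < X < x]` and jump `E[X; X = x]`; since `E X = 0`, `G` increases to `m`.
So for `h ∈ (0, m)` the infimum `x_+(h)` is attained: it is the least `x ≥ 0` with `h ≤ G x`,
and then `G(x-) ≤ h ≤ G x`, which `u_+(h)` records. Conversely, the conditions defining `𝒢_+`
say exactly that `x` is this least point for `h = h_+(x, u)`: `x ∈ M_+` together with
`x ∈ L_+ ⇒ u > 0` excludes a smaller point with `G ≥ h` (so in particular `h > G 0 = 0`), and
the condition at the top of the support keeps `h < m`. The negative side is the positive side
for `-X`, because `G_{-X}(x) = G_X(-x)`.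
-/

def momentOn (P : Measure Ω) (X : Ω → ℝ) (s : Set ℝ) : ℝ := ∫ ω in X ⁻¹' s, X ω ∂P

section momentOn

variable {P : Measure Ω} {X : Ω → ℝ} {s t : Set ℝ}

lemma momentOn_nonneg (hXm : Measurable X) (hs : MeasurableSet s) (hs0 : s ⊆ Ici 0) :
    0 ≤ momentOn P X s :=
  setIntegral_nonneg (hXm hs) fun _ hω => hs0 hω

lemma momentOn_pos_iff (hXm : Measurable X) (hXint : Integrable X P) (hs : MeasurableSet s)
    (hs0 : s ⊆ Ioi 0) : 0 < momentOn P X s ↔ 0 < P (X ⁻¹' s) := by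
  rw [momentOn, setIntegral_pos_iff_support_of_nonneg_ae _ hXint.integrableOn,
    inter_eq_right.mpr (show X ⁻¹' s ⊆ support X from fun ω hω => (hs0 hω).ne')]
  filter_upwards [ae_restrict_mem (hXm hs)] with ω hω using (hs0 hω).le

lemma momentOn_eq_zero_iff (hXm : Measurable X) (hXint : Integrable X P) (hs : MeasurableSet s)
    (hs0 : s ⊆ Ioi 0) : momentOn P X s = 0 ↔ P (X ⁻¹' s) = 0 := by
  rw [← not_iff_not, ← ne_eq, ← (momentOn_nonneg hXm hs (hs0.trans Ioi_subset_Ici_self)).lt_iff_ne',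
    momentOn_pos_iff hXm hXint hs hs0, pos_iff_ne_zero]

lemma momentOn_union (hXm : Measurable X) (hXint : Integrable X P) (hst : Disjoint s t)
    (ht : MeasurableSet t) : momentOn P X (s ∪ t) = momentOn P X s + momentOn P X t :=
  setIntegral_union (hst.preimage X) (hXm ht) hXint.integrableOn hXint.integrableOn

lemma tendsto_momentOn {ι : Type*} {l : Filter ι} [l.IsCountablyGenerated] (hXm : Measurable X)
    (hXint : Integrable X P) {s : ι → Set ℝ} (hs : ∀ i, MeasurableSet (s i))
    (hS : MeasurableSet t) (hlim : ∀ x, ∀ᶠ i in l, x ∈ s i ↔ x ∈ t) :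
    Tendsto (fun i => momentOn P X (s i)) l (𝓝 (momentOn P X t)) := by
  simp only [momentOn, ← integral_indicator (hXm (hs _)), ← integral_indicator (hXm hS)]
  refine tendsto_integral_filter_of_dominated_convergence (fun ω => ‖X ω‖)
    (.of_forall fun i => hXint.1.indicator (hXm (hs i)))
    (.of_forall fun i => .of_forall fun ω => norm_indicator_le_norm_self _ _) hXint.norm
    (.of_forall fun ω => tendsto_const_nhds.congr' ?_)
  filter_upwards [hlim (X ω)] with i hi
  by_cases ht : X ω ∈ t <;> simp [ht, hi]

end momentOn

section G

variable {P : Measure Ω} {X : Ω → ℝ} {x y : ℝ}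

lemma G_of_nonneg (hXm : Measurable X) (hx : 0 ≤ x) : G P X x = momentOn P X (Ioc 0 x) := by
  simp only [G, if_pos hx, momentOn, ← integral_indicator (hXm measurableSet_Ioc)]
  congr 1 with ω
  by_cases h : X ω ∈ Ioc 0 x <;> simp [h]

lemma G_zero : G P X 0 = 0 := by
  simp [G]

lemma Gbar_coe (x : ℝ) : Gbar P X x = G P X x := by
  simp [Gbar]

lemma G_add_momentOn_Ioc (hXm : Measurable X) (hXint : Integrable X P) (hy : 0 ≤ y)
    (hyx : y ≤ x) : G P X x = G P X y + momentOn P X (Ioc y x) := by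
  rw [G_of_nonneg hXm (hy.trans hyx), G_of_nonneg hXm hy,
    ← momentOn_union hXm hXint (Ioc_disjoint_Ioc_of_le le_rfl) measurableSet_Ioc,
    Ioc_union_Ioc_eq_Ioc hy hyx]

lemma G_mono (hXm : Measurable X) (hXint : Integrable X P) (hy : 0 ≤ y) (hyx : y ≤ x) :
    G P X y ≤ G P X x := by
  rw [G_add_momentOn_Ioc hXm hXint hy hyx]
  linarith [momentOn_nonneg (P := P) hXm (measurableSet_Ioc (a := y) (b := x))
    fun t ht => hy.trans ht.1.le]

lemma tendsto_G {l : Filter ℝ} [l.IsCountablyGenerated] (hXm : Measurable X)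
    (hXint : Integrable X P) (hl : ∀ᶠ y in l, 0 ≤ y) (hS : MeasurableSet s)
    (hlim : ∀ t, ∀ᶠ y in l, t ∈ Ioc 0 y ↔ t ∈ s) :
    Tendsto (G P X) l (𝓝 (momentOn P X s)) :=
  (tendsto_momentOn hXm hXint (fun _ => measurableSet_Ioc) hS hlim).congr' <| by
    filter_upwards [hl] with y hy using (G_of_nonneg hXm hy).symm

lemma tendsto_G_nhdsGT (hXm : Measurable X) (hXint : Integrable X P) (hx : 0 ≤ x) :
    Tendsto (G P X) (𝓝[>] x) (𝓝 (G P X x)) := by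
  rw [G_of_nonneg hXm hx]
  refine tendsto_G hXm hXint ?_ measurableSet_Ioc fun t => ?_
  · filter_upwards [self_mem_nhdsWithin] with y hy using hx.trans (le_of_lt hy)
  rcases le_or_gt t x with htx | hxt
  · filter_upwards [self_mem_nhdsWithin] with y hy
    simp only [mem_Ioc, htx, htx.trans (le_of_lt hy), and_true]
  · filter_upwards [Ioo_mem_nhdsGT hxt] with y hy
    simp only [mem_Ioc, not_le.mpr hy.2, not_le.mpr hxt, and_false]

lemma tendsto_G_nhdsLT (hXm : Measurable X) (hXint : Integrable X P) (hx : 0 < x) :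
    Tendsto (G P X) (𝓝[<] x) (𝓝 (momentOn P X (Ioo 0 x))) := by
  refine tendsto_G hXm hXint ?_ measurableSet_Ioo fun t => ?_
  · filter_upwards [Ioo_mem_nhdsLT hx] with y hy using hy.1.le
  rcases lt_or_ge t x with htx | hxt
  · filter_upwards [Ioo_mem_nhdsLT htx] with y hy
    simp only [mem_Ioc, mem_Ioo, htx, hy.1.le, and_true]
  · filter_upwards [self_mem_nhdsWithin] with y hy
    simp only [mem_Ioc, mem_Ioo, not_le.mpr (lt_of_lt_of_le hy hxt), not_lt.mpr hxt, and_false]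

lemma leftLim_G (hXm : Measurable X) (hXint : Integrable X P) (hx : 0 < x) :
    leftLim (G P X) x = momentOn P X (Ioo 0 x) :=
  leftLim_eq_of_tendsto (tendsto_G_nhdsLT hXm hXint hx)

lemma leftLim_G_eq_G_add (hXm : Measurable X) (hXint : Integrable X P) (hy : 0 ≤ y)
    (hyx : y < x) : leftLim (G P X) x = G P X y + momentOn P X (Ioo y x) := by
  rw [leftLim_G hXm hXint (hy.trans_lt hyx), G_of_nonneg hXm hy,
    ← momentOn_union hXm hXint
      (Ioc_disjoint_Ioi_same.mono_right Ioo_subset_Ioi_self) measurableSet_Ioo,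
    Ioc_union_Ioo_eq_Ioo hy hyx]

lemma G_eq_leftLim_G_add (hXm : Measurable X) (hXint : Integrable X P) (hx : 0 < x) :
    G P X x = leftLim (G P X) x + momentOn P X {x} := by
  rw [leftLim_G hXm hXint hx, G_of_nonneg hXm hx.le,
    ← momentOn_union hXm hXint (by simp) (measurableSet_singleton x), Ioo_union_right hx]

lemma leftLim_G_le_G (hXm : Measurable X) (hXint : Integrable X P) (hx : 0 < x) :
    leftLim (G P X) x ≤ G P X x := by
  rw [G_eq_leftLim_G_add hXm hXint hx]
  linarith [momentOn_nonneg (P := P) hXm (measurableSet_singleton x)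
    (singleton_subset_iff.mpr hx.le)]

lemma leftLim_G_lt_G_iff (hXm : Measurable X) (hXint : Integrable X P) (hx : 0 < x) :
    leftLim (G P X) x < G P X x ↔ x ∉ Nplus P X := by
  rw [G_eq_leftLim_G_add hXm hXint hx, lt_add_iff_pos_right,
    momentOn_pos_iff hXm hXint (measurableSet_singleton x) (singleton_subset_iff.mpr hx),
    pos_iff_ne_zero]
  simp [Nplus, hx, preimage]

lemma G_eq_leftLim_G_iff (hXm : Measurable X) (hXint : Integrable X P) (hx : 0 < x) :
    G P X x = leftLim (G P X) x ↔ x ∈ Nplus P X := by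
  rw [← not_iff_not, ← leftLim_G_lt_G_iff hXm hXint hx,
    (leftLim_G_le_G hXm hXint hx).lt_iff_ne', ne_eq]

lemma mHalf_eq_momentOn_Ioi (hXm : Measurable X) (hXint : Integrable X P)
    (hmean : ∫ ω, X ω ∂P = 0) : mHalf P X = momentOn P X (Ioi 0) := by
  have hpos : MeasurableSet (X ⁻¹' Ioi 0) := hXm measurableSet_Ioi
  have hX := integral_add_compl hpos hXint
  have habs := integral_add_compl hpos hXint.abs
  have hIoi : ∫ ω in X ⁻¹' Ioi 0, |X ω| ∂P = ∫ ω in X ⁻¹' Ioi 0, X ω ∂P :=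
    setIntegral_congr_fun hpos fun ω hω => abs_of_pos hω
  have hIic : ∫ ω in (X ⁻¹' Ioi 0)ᶜ, |X ω| ∂P = -∫ ω in (X ⁻¹' Ioi 0)ᶜ, X ω ∂P := by
    rw [← integral_neg]
    exact setIntegral_congr_fun hpos.compl fun ω hω => abs_of_nonpos (not_lt.mp hω)
  rw [mHalf, momentOn, ← habs, hIoi, hIic]
  linarith

lemma mHalf_eq_G_add (hXm : Measurable X) (hXint : Integrable X P) (hmean : ∫ ω, X ω ∂P = 0)
    (hx : 0 ≤ x) : mHalf P X = G P X x + momentOn P X (Ioi x) := by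
  rw [mHalf_eq_momentOn_Ioi hXm hXint hmean, G_of_nonneg hXm hx,
    ← momentOn_union hXm hXint Ioc_disjoint_Ioi_same measurableSet_Ioi,
    Ioc_union_Ioi_eq_Ioi hx]

lemma tendsto_G_atTop (hXm : Measurable X) (hXint : Integrable X P) (hmean : ∫ ω, X ω ∂P = 0) :
    Tendsto (G P X) atTop (𝓝 (mHalf P X)) := by
  rw [mHalf_eq_momentOn_Ioi hXm hXint hmean]
  refine tendsto_G hXm hXint (eventually_ge_atTop 0) measurableSet_Ioi fun t => ?_
  filter_upwards [eventually_ge_atTop t] with y hy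
  simp [hy]

end G

section plus

variable {P : Measure Ω} {X : Ω → ℝ} {h x u : ℝ}

lemma xPlus_eq_of_isLeast (hx : IsLeast {y | 0 ≤ y ∧ h ≤ G P X y} x) : xPlus P X h = x := by
  refine le_antisymm (sInf_le ⟨EReal.coe_nonneg.mpr hx.1.1, by rw [Gbar_coe]; exact hx.1.2⟩) ?_
  refine le_sInf fun z ⟨hz0, hzh⟩ => ?_
  induction z using EReal.rec with
  | bot => exact absurd hz0 (by simp)
  | top => exact le_top
  | coe r =>
    rw [Gbar_coe] at hzh
    exact EReal.coe_le_coe_iff.mpr (hx.2 ⟨EReal.coe_nonneg.mp hz0, hzh⟩)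

lemma exists_isLeast (hXm : Measurable X) (hXint : Integrable X P) (hmean : ∫ ω, X ω ∂P = 0)
    (hh : h < mHalf P X) : ∃ x, IsLeast {y | 0 ≤ y ∧ h ≤ G P X y} x := by
  set S := {y | 0 ≤ y ∧ h ≤ G P X y}
  have hne : S.Nonempty := by
    obtain ⟨y, hy, hy0⟩ := (((tendsto_G_atTop hXm hXint hmean).eventually
      (lt_mem_nhds hh)).and (eventually_ge_atTop 0)).exists
    exact ⟨y, hy0, hy.le⟩
  have hbdd : BddBelow S := ⟨0, fun _ hy => hy.1⟩
  have hinf0 : 0 ≤ sInf S := le_csInf hne fun _ hy => hy.1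
  refine ⟨sInf S, ⟨hinf0, ge_of_tendsto (tendsto_G_nhdsGT hXm hXint hinf0) ?_⟩,
    fun _ hy => csInf_le hbdd hy⟩
  filter_upwards [self_mem_nhdsWithin] with y hy
  obtain ⟨z, hz, hzy⟩ := exists_lt_of_csInf_lt hne hy
  exact hz.2.trans (G_mono hXm hXint hz.1 hzy.le)

lemma pos_of_isLeast (hh : 0 < h) (hx : IsLeast {y | 0 ≤ y ∧ h ≤ G P X y} x) : 0 < x :=
  hx.1.1.lt_of_ne fun hx0 => (hx.1.2.trans_eq (by rw [← hx0, G_zero])).not_gt hh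

lemma G_lt_of_isLeast (hx : IsLeast {y | 0 ≤ y ∧ h ≤ G P X y} x) {y : ℝ} (hy : 0 ≤ y)
    (hyx : y < x) : G P X y < h :=
  lt_of_not_ge fun hle => (hx.2 ⟨hy, hle⟩).not_gt hyx

lemma mem_Mplus_of_isLeast (hXm : Measurable X) (hXint : Integrable X P) (hh : 0 < h)
    (hx : IsLeast {y | 0 ≤ y ∧ h ≤ G P X y} x) : x ∈ Mplus P X := by
  refine ⟨pos_of_isLeast hh hx, fun y hy => ?_⟩
  set y' := max y 0
  have hy'x : y' < x := max_lt hy (pos_of_isLeast hh hx)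
  have hpos : 0 < momentOn P X (Ioc y' x) := by
    have := G_add_momentOn_Ioc hXm hXint (le_max_right y 0) hy'x.le
    linarith [hx.1.2, G_lt_of_isLeast hx (le_max_right y 0) hy'x]
  rw [momentOn_pos_iff hXm hXint measurableSet_Ioc fun t ht => (le_max_right y 0).trans_lt ht.1]
    at hpos
  exact hpos.trans_le (measure_mono fun ω hω => ⟨(le_max_left y 0).trans_lt hω.1, hω.2⟩)

lemma G_eq_mHalf_iff (hXm : Measurable X) (hXint : Integrable X P) (hmean : ∫ ω, X ω ∂P = 0)
    (hx : 0 ≤ x) : G P X x = mHalf P X ↔ P {ω | x < X ω} = 0 := by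
  rw [mHalf_eq_G_add hXm hXint hmean hx, left_eq_add,
    momentOn_eq_zero_iff hXm hXint measurableSet_Ioi fun _ ht => hx.trans_lt ht]
  rfl

lemma G_le_mHalf (hXm : Measurable X) (hXint : Integrable X P) (hmean : ∫ ω, X ω ∂P = 0)
    (hx : 0 ≤ x) : G P X x ≤ mHalf P X := by
  rw [mHalf_eq_G_add hXm hXint hmean hx, le_add_iff_nonneg_right]
  exact momentOn_nonneg hXm measurableSet_Ioi fun _ ht => hx.trans (le_of_lt ht)

lemma hPlus_uPlus (hXm : Measurable X) (hXint : Integrable X P)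
    (hx : (xPlus P X h).toReal = x) (hx0 : 0 < x)
    (hN : x ∈ Nplus P X → G P X x = h) : hPlus P X x (uPlus P X h) = h := by
  rw [uPlus, hx, hPlus]
  split_ifs with hNx
  · rw [← hN hNx]; ring
  · have := sub_ne_zero.mpr ((leftLim_G_lt_G_iff hXm hXint hx0).mpr hNx).ne'
    rw [div_mul_cancel₀ _ this]
    ring

lemma uPlus_hPlus (hXm : Measurable X) (hXint : Integrable X P)
    (hx : (xPlus P X (hPlus P X x u)).toReal = x) (hx0 : 0 < x)
    (hN : x ∈ Nplus P X → u = 1) : uPlus P X (hPlus P X x u) = u := by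
  rw [uPlus, hx]
  split_ifs with hNx
  · exact (hN hNx).symm
  · have := sub_ne_zero.mpr ((leftLim_G_lt_G_iff hXm hXint hx0).mpr hNx).ne'
    rw [hPlus, add_sub_cancel_left, mul_div_assoc, div_self this, mul_one]

lemma leftLim_G_le_of_isLeast (hXm : Measurable X) (hXint : Integrable X P) (hh : 0 < h)
    (hx : IsLeast {y | 0 ≤ y ∧ h ≤ G P X y} x) : leftLim (G P X) x ≤ h := by
  have hx0 := pos_of_isLeast hh hx
  have hlim := tendsto_G_nhdsLT hXm hXint hx0
  rw [← leftLim_G hXm hXint hx0] at hlim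
  refine le_of_tendsto hlim ?_
  filter_upwards [Ioo_mem_nhdsLT hx0] with y hy using (G_lt_of_isLeast hx hy.1.le hy.2).le

lemma G_eq_of_isLeast_of_mem_Nplus (hXm : Measurable X) (hXint : Integrable X P) (hh : 0 < h)
    (hx : IsLeast {y | 0 ≤ y ∧ h ≤ G P X y} x) (hN : x ∈ Nplus P X) : G P X x = h := by
  refine le_antisymm ?_ hx.1.2
  rw [(G_eq_leftLim_G_iff hXm hXint (pos_of_isLeast hh hx)).mpr hN]
  exact leftLim_G_le_of_isLeast hXm hXint hh hx

lemma mem_Gplus_of_isLeast (hXm : Measurable X) (hXint : Integrable X P)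
    (hmean : ∫ ω, X ω ∂P = 0) (hh : h ∈ Ioo 0 (mHalf P X))
    (hx : IsLeast {y | 0 ≤ y ∧ h ≤ G P X y} x) : (x, uPlus P X h) ∈ Gplus P X := by
  have hx0 := pos_of_isLeast hh.1 hx
  have hM := mem_Mplus_of_isLeast hXm hXint hh.1 hx
  have hxr : (xPlus P X h).toReal = x := by rw [xPlus_eq_of_isLeast hx, EReal.toReal_coe]
  by_cases hN : x ∈ Nplus P X
  · rw [uPlus, hxr, if_pos hN]
    refine ⟨hM, zero_le_one, le_rfl, fun _ => rfl, fun _ => one_pos, fun htop => ?_⟩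
    refine absurd ?_ hh.2.ne
    rw [← G_eq_of_isLeast_of_mem_Nplus hXm hXint hh.1 hx hN,
      G_eq_mHalf_iff hXm hXint hmean hx0.le]
    exact htop
  · have hLh := leftLim_G_le_of_isLeast hXm hXint hh.1 hx
    have hjump := sub_pos.mpr ((leftLim_G_lt_G_iff hXm hXint hx0).mpr hN)
    rw [uPlus, hxr, if_neg hN]
    refine ⟨hM, div_nonneg (sub_nonneg.mpr hLh) hjump.le,
      (div_le_one hjump).mpr (by linarith [hx.1.2]), fun hN' => absurd hN' hN,
      fun ⟨_, y, hy0, hyx, hPy⟩ => div_pos ?_ hjump, fun htop => ⟨hN, (div_lt_one hjump).mpr ?_⟩⟩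
    · have hL := leftLim_G_eq_G_add hXm hXint hy0 hyx
      rw [(momentOn_eq_zero_iff hXm hXint measurableSet_Ioo
        fun _ ht => hy0.trans_lt ht.1).mpr hPy, add_zero] at hL
      linarith [G_lt_of_isLeast hx hy0 hyx]
    · linarith [(G_eq_mHalf_iff hXm hXint hmean hx0.le).mpr htop, hh.2]

lemma isLeast_of_mem_Gplus (hXm : Measurable X) (hXint : Integrable X P)
    (hp : (x, u) ∈ Gplus P X) : IsLeast {y | 0 ≤ y ∧ hPlus P X x u ≤ G P X y} x := by
  obtain ⟨hM, hu0, hu1, -, hL, -⟩ := hp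
  have hx0 : 0 < x := hM.1
  have hLG := leftLim_G_le_G hXm hXint hx0
  refine ⟨⟨hx0.le, by rw [hPlus]; nlinarith⟩, fun y ⟨hy0, hyh⟩ => not_lt.mp fun hyx => ?_⟩
  -- `h ≤ G y ≤ G(x-)` leaves no mass in `(y, x)`, so `x ∈ L_+` and `u > 0`,
  -- while `x ∈ M_+` gives `G y < G x`; together `h > G(x-)`.
  have hLy := leftLim_G_eq_G_add hXm hXint hy0 hyx
  have hgap : momentOn P X (Ioo y x) = 0 := by
    have hLh : leftLim (G P X) x ≤ hPlus P X x u := by rw [hPlus]; nlinarith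
    linarith [momentOn_nonneg (P := P) hXm (measurableSet_Ioo (a := y) (b := x))
      fun _ ht => hy0.trans (le_of_lt ht.1)]
  have hu : 0 < u := hL ⟨hx0, y, hy0, hyx,
    (momentOn_eq_zero_iff hXm hXint measurableSet_Ioo fun _ ht => hy0.trans_lt ht.1).mp hgap⟩
  have hGy : G P X y < G P X x := by
    rw [G_add_momentOn_Ioc hXm hXint hy0 hyx.le, lt_add_iff_pos_right,
      momentOn_pos_iff hXm hXint measurableSet_Ioc fun _ ht => hy0.trans_lt ht.1]
    exact hM.2 y hyx
  have hLh : leftLim (G P X) x < hPlus P X x u := by rw [hPlus]; nlinarith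
  linarith

lemma hPlus_mem_Ioo (hXm : Measurable X) (hXint : Integrable X P) (hmean : ∫ ω, X ω ∂P = 0)
    (hp : (x, u) ∈ Gplus P X) : hPlus P X x u ∈ Ioo 0 (mHalf P X) := by
  have hleast := isLeast_of_mem_Gplus hXm hXint hp
  obtain ⟨hM, hu0, hu1, -, -, htop⟩ := hp
  have hx0 : 0 < x := hM.1
  refine ⟨lt_of_not_ge fun hle => ?_, lt_of_le_of_ne
    (hleast.1.2.trans (G_le_mHalf hXm hXint hmean hx0.le)) fun hm => ?_⟩
  · exact (hleast.2 ⟨le_rfl, hle.trans_eq G_zero.symm⟩).not_gt hx0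
  -- `h = m` forces `G x = m`: no mass above `x`, hence `x ∉ N_+`, `u < 1` and `h < G x`.
  have hGm := le_antisymm (G_le_mHalf hXm hXint hmean hx0.le) (hm ▸ hleast.1.2)
  obtain ⟨hN, hu1'⟩ := htop ((G_eq_mHalf_iff hXm hXint hmean hx0.le).mp hGm)
  have hjump := (leftLim_G_lt_G_iff hXm hXint hx0).mpr hN
  have hhG : hPlus P X x u < G P X x := by rw [hPlus]; nlinarith
  linarith

theorem bijection_plus (hXm : Measurable X) (hXint : Integrable X P) (hmean : ∫ ω, X ω ∂P = 0) :
    (∀ h ∈ Ioo (0:ℝ) (mHalf P X), ((xPlus P X h).toReal, uPlus P X h) ∈ Gplus P X) ∧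
      InjOn (fun h => ((xPlus P X h).toReal, uPlus P X h)) (Ioo (0:ℝ) (mHalf P X)) ∧
      (∀ p ∈ Gplus P X, hPlus P X p.1 p.2 ∈ Ioo (0:ℝ) (mHalf P X) ∧
        ((xPlus P X (hPlus P X p.1 p.2)).toReal, uPlus P X (hPlus P X p.1 p.2)) = p) ∧
      (∀ h ∈ Ioo (0:ℝ) (mHalf P X), hPlus P X (xPlus P X h).toReal (uPlus P X h) = h) := by
  have hforward : ∀ h ∈ Ioo (0:ℝ) (mHalf P X),
      ((xPlus P X h).toReal, uPlus P X h) ∈ Gplus P X ∧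
        hPlus P X (xPlus P X h).toReal (uPlus P X h) = h := by
    intro h hh
    obtain ⟨x, hx⟩ := exists_isLeast hXm hXint hmean hh.2
    have hxr : (xPlus P X h).toReal = x := by rw [xPlus_eq_of_isLeast hx, EReal.toReal_coe]
    rw [hxr]
    exact ⟨mem_Gplus_of_isLeast hXm hXint hmean hh hx, hPlus_uPlus hXm hXint hxr
      (pos_of_isLeast hh.1 hx) (G_eq_of_isLeast_of_mem_Nplus hXm hXint hh.1 hx)⟩
  have hleft : LeftInvOn (fun p : ℝ × ℝ => hPlus P X p.1 p.2)
      (fun h => ((xPlus P X h).toReal, uPlus P X h)) (Ioo 0 (mHalf P X)) :=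
    fun h hh => (hforward h hh).2
  refine ⟨fun h hh => (hforward h hh).1, hleft.injOn, fun ⟨x, u⟩ hp => ?_, hleft⟩
  have hx := isLeast_of_mem_Gplus hXm hXint hp
  have hxr : (xPlus P X (hPlus P X x u)).toReal = x := by
    rw [xPlus_eq_of_isLeast hx, EReal.toReal_coe]
  exact ⟨hPlus_mem_Ioo hXm hXint hmean hp,
    Prod.ext hxr (uPlus_hPlus hXm hXint hxr hp.1.1 hp.2.2.2.1)⟩

end plus

lemma rightLim_eq_leftLim_comp_neg {β : Type*} [TopologicalSpace β] [T2Space β] (f : ℝ → β)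
    (a : ℝ) : rightLim f a = leftLim (fun y => f (-y)) (-a) := by
  have hiff : ∀ b, Tendsto f (𝓝[>] a) (𝓝 b) ↔ Tendsto (fun y => f (-y)) (𝓝[<] (-a)) (𝓝 b) := by
    intro b
    rw [← neg_nhdsGT, ← Filter.map_neg, tendsto_map'_iff]
    simp [Function.comp_def]
  by_cases hlim : ∃ b, Tendsto f (𝓝[>] a) (𝓝 b)
  · obtain ⟨b, hb⟩ := hlim
    rw [rightLim_eq_of_tendsto hb, leftLim_eq_of_tendsto ((hiff b).mp hb)]
  · rw [rightLim_eq_of_not_tendsto f hlim,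
      leftLim_eq_of_not_tendsto _ (by simpa only [hiff] using hlim), neg_neg]

section reflection

variable {P : Measure Ω} {X : Ω → ℝ}

lemma G_neg (x : ℝ) : G P (-X) x = G P X (-x) := by
  rcases lt_trichotomy x 0 with hx | rfl | hx
  · rw [G, if_neg hx.not_ge, G, if_pos (neg_nonneg.mpr hx.le)]
    congr 1 with ω
    simp only [Pi.neg_apply, mem_Ico, mem_Ioc, neg_neg, le_neg (b := X ω), neg_lt_zero, and_comm]
  · simp [G]
  · rw [G, if_pos hx.le, G, if_neg (neg_neg_iff_pos.mpr hx).not_ge]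
    congr 1 with ω
    simp only [Pi.neg_apply, mem_Ico, mem_Ioc, neg_le (a := X ω), neg_pos, and_comm]

lemma mHalf_neg : mHalf P (-X) = mHalf P X := by
  simp [mHalf]

lemma Gbar_neg (x : EReal) : Gbar P (-X) x = Gbar P X (-x) := by
  induction x using EReal.rec with
  | bot => simp [Gbar, mHalf_neg]
  | top => simp [Gbar, mHalf_neg]
  | coe r => rw [← EReal.coe_neg, Gbar_coe, Gbar_coe, G_neg]

lemma xMinus_eq_neg_xPlus (h : ℝ) : xMinus P X h = -xPlus P (-X) h := by
  have hset : {x : EReal | x ≤ 0 ∧ h ≤ Gbar P X x} =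
      (fun x => -x) '' {x | 0 ≤ x ∧ h ≤ Gbar P (-X) x} := by
    rw [image_neg_eq_neg]
    ext x
    simp [Gbar_neg]
  rw [xMinus, xPlus, hset, sSup_image]
  -- negation, as an order isomorphism `EReal ≃o ERealᵒᵈ`, turns `sInf` into `sSup`
  exact (EReal.negOrderIso.map_sInf _).symm

lemma rightLim_G_eq_leftLim_G_neg (x : ℝ) : rightLim (G P X) x = leftLim (G P (-X)) (-x) := by
  rw [rightLim_eq_leftLim_comp_neg]
  simp only [← G_neg]

lemma hMinus_eq_hPlus_neg (x u : ℝ) : hMinus P X x u = hPlus P (-X) (-x) u := by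
  rw [hMinus, hPlus, rightLim_G_eq_leftLim_G_neg, G_neg, neg_neg]

lemma measure_neg_mem (s : Set ℝ) : P {ω | (-X) ω ∈ s} = P {ω | X ω ∈ -s} := rfl

lemma mem_Nminus_iff {x : ℝ} : x ∈ Nminus P X ↔ -x ∈ Nplus P (-X) := by
  simp [Nminus, Nplus]

lemma mem_Mminus_iff {x : ℝ} : x ∈ Mminus P X ↔ -x ∈ Mplus P (-X) := by
  simp only [Mminus, Mplus, mem_ofPred_eq, measure_neg_mem, neg_Ioc, neg_neg, neg_pos,
    neg_surjective.forall (p := fun y => y < -x → _), neg_lt_neg_iff]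

lemma mem_Lminus_iff {x : ℝ} : x ∈ Lminus P X ↔ -x ∈ Lplus P (-X) := by
  simp only [Lminus, Lplus, mem_ofPred_eq, measure_neg_mem, neg_Ioo, neg_neg, neg_pos,
    neg_surjective.exists (p := fun y => 0 ≤ y ∧ y < -x ∧ _), neg_nonneg, neg_lt_neg_iff]
  tauto

lemma mem_Gminus_iff {x u : ℝ} : (x, u) ∈ Gminus P X ↔ (-x, u) ∈ Gplus P (-X) := by
  simp only [Gminus, Gplus, mem_ofPred_eq, mem_Mminus_iff, mem_Nminus_iff, mem_Lminus_iff,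
    Pi.neg_apply, neg_lt_neg_iff]

lemma toReal_xMinus (h : ℝ) : (xMinus P X h).toReal = -(xPlus P (-X) h).toReal := by
  rw [xMinus_eq_neg_xPlus, EReal.toReal_neg_eq]

lemma uMinus_eq_uPlus_neg (h : ℝ) : uMinus P X h = uPlus P (-X) h := by
  classical
  rw [uMinus, uPlus]
  refine if_congr ?_ rfl ?_
  · rw [toReal_xMinus, mem_Nminus_iff, neg_neg]
  · rw [toReal_xMinus, rightLim_G_eq_leftLim_G_neg, ← G_neg, neg_neg]

theorem bijection_minus (hXm : Measurable X) (hXint : Integrable X P) (hmean : ∫ ω, X ω ∂P = 0) :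
    (∀ h ∈ Ioo (0:ℝ) (mHalf P X), ((xMinus P X h).toReal, uMinus P X h) ∈ Gminus P X) ∧
      InjOn (fun h => ((xMinus P X h).toReal, uMinus P X h)) (Ioo (0:ℝ) (mHalf P X)) ∧
      (∀ p ∈ Gminus P X, hMinus P X p.1 p.2 ∈ Ioo (0:ℝ) (mHalf P X) ∧
        ((xMinus P X (hMinus P X p.1 p.2)).toReal, uMinus P X (hMinus P X p.1 p.2)) = p) ∧
      (∀ h ∈ Ioo (0:ℝ) (mHalf P X), hMinus P X (xMinus P X h).toReal (uMinus P X h) = h) := by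
  obtain ⟨hmaps, -, hsurj, hleft⟩ :=
    bijection_plus (P := P) hXm.neg hXint.neg (by simp [integral_neg, hmean])
  rw [mHalf_neg] at hmaps hsurj hleft
  have hleft' : LeftInvOn (fun p : ℝ × ℝ => hMinus P X p.1 p.2)
      (fun h => ((xMinus P X h).toReal, uMinus P X h)) (Ioo 0 (mHalf P X)) := fun h hh => by
    simp only [toReal_xMinus, uMinus_eq_uPlus_neg, hMinus_eq_hPlus_neg, neg_neg]
    exact hleft h hh
  refine ⟨fun h hh => ?_, hleft'.injOn, fun ⟨x, u⟩ hp => ?_, hleft'⟩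
  · rw [toReal_xMinus, uMinus_eq_uPlus_neg, mem_Gminus_iff, neg_neg]
    exact hmaps h hh
  · obtain ⟨hh, hxu⟩ := hsurj _ (mem_Gminus_iff.mp hp)
    simp only [Prod.ext_iff] at hxu
    simp only [hMinus_eq_hPlus_neg, toReal_xMinus, uMinus_eq_uPlus_neg, hxu, neg_neg, and_true]
    exact hh

end reflection

theorem bijection_G_general
    (P : Measure Ω) (X : Ω → ℝ)
    (hXm : Measurable X) (hXint : Integrable X P)
    (hXmean : ∫ ω, X ω ∂P = 0) :
    ((∀ h ∈ Set.Ioo (0:ℝ) (mHalf P X),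
        ((xPlus P X h).toReal, uPlus P X h) ∈ Gplus P X) ∧
      Set.InjOn (fun h => ((xPlus P X h).toReal, uPlus P X h))
        (Set.Ioo (0:ℝ) (mHalf P X)) ∧
      (∀ p ∈ Gplus P X, hPlus P X p.1 p.2 ∈ Set.Ioo (0:ℝ) (mHalf P X) ∧
        ((xPlus P X (hPlus P X p.1 p.2)).toReal,
          uPlus P X (hPlus P X p.1 p.2)) = p) ∧
      (∀ h ∈ Set.Ioo (0:ℝ) (mHalf P X),
        hPlus P X (xPlus P X h).toReal (uPlus P X h) = h)) ∧
    ((∀ h ∈ Set.Ioo (0:ℝ) (mHalf P X),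
        ((xMinus P X h).toReal, uMinus P X h) ∈ Gminus P X) ∧
      Set.InjOn (fun h => ((xMinus P X h).toReal, uMinus P X h))
        (Set.Ioo (0:ℝ) (mHalf P X)) ∧
      (∀ p ∈ Gminus P X, hMinus P X p.1 p.2 ∈ Set.Ioo (0:ℝ) (mHalf P X) ∧
        ((xMinus P X (hMinus P X p.1 p.2)).toReal,
          uMinus P X (hMinus P X p.1 p.2)) = p) ∧
      (∀ h ∈ Set.Ioo (0:ℝ) (mHalf P X),
        hMinus P X (xMinus P X h).toReal (uMinus P X h) = h)) :=
  ⟨bijection_plus hXm hXint hXmean, bijection_minus hXm hXint hXmean⟩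

/-- Lemma `bijection` of the paper: `h ↦ (x_+(h), u_+(h))` is a
one-to-one map of `(0,m)` onto `𝒢_+` with inverse `(x,u) ↦ h_+(x,u)`, and similarly
`h ↦ (x_-(h), u_-(h))` is a one-to-one map of `(0,m)` onto `𝒢_-` with inverse `h_-`. -/
theorem bijection_G
    (P : Measure Ω) [IsProbabilityMeasure P] (X : Ω → ℝ)
    (hXm : Measurable X) (hXint : Integrable X P)
    (hXmean : ∫ ω, X ω ∂P = 0) (hX0 : P {ω | X ω = 0} ≠ 1) :
    ((∀ h ∈ Set.Ioo (0:ℝ) (mHalf P X),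
        ((xPlus P X h).toReal, uPlus P X h) ∈ Gplus P X) ∧
      Set.InjOn (fun h => ((xPlus P X h).toReal, uPlus P X h))
        (Set.Ioo (0:ℝ) (mHalf P X)) ∧
      (∀ p ∈ Gplus P X, hPlus P X p.1 p.2 ∈ Set.Ioo (0:ℝ) (mHalf P X) ∧
        ((xPlus P X (hPlus P X p.1 p.2)).toReal,
          uPlus P X (hPlus P X p.1 p.2)) = p) ∧
      (∀ h ∈ Set.Ioo (0:ℝ) (mHalf P X),
        hPlus P X (xPlus P X h).toReal (uPlus P X h) = h)) ∧
    ((∀ h ∈ Set.Ioo (0:ℝ) (mHalf P X),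
        ((xMinus P X h).toReal, uMinus P X h) ∈ Gminus P X) ∧
      Set.InjOn (fun h => ((xMinus P X h).toReal, uMinus P X h))
        (Set.Ioo (0:ℝ) (mHalf P X)) ∧
      (∀ p ∈ Gminus P X, hMinus P X p.1 p.2 ∈ Set.Ioo (0:ℝ) (mHalf P X) ∧
        ((xMinus P X (hMinus P X p.1 p.2)).toReal,
          uMinus P X (hMinus P X p.1 p.2)) = p) ∧
      (∀ h ∈ Set.Ioo (0:ℝ) (mHalf P X),
        hMinus P X (xMinus P X h).toReal (uMinus P X h) = h)) :=
  bijection_G_general P X hXm hXint hXmean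

end PinelisTtest
end
end

section
/- P( X ≠ 0 and (X, U_X) ∉ 𝒢 ) = 0. -/
open MeasureTheory ProbabilityTheory Set Filter Function
open scoped ENNReal NNReal Topology

noncomputable section

namespace PinelisTtest

variable {Ω : Type*} [MeasurableSpace Ω]

-- auxiliary section
section Aux

lemma aux_Ioc_null (μ : Measure ℝ) (q : ℝ) :
    μ {x | q < x ∧ μ (Set.Ioc q x) = 0} = 0 := by
  set A := {x : ℝ | q < x ∧ μ (Set.Ioc q x) = 0} with hA
  rcases A.eq_empty_or_nonempty with h | hne
  · simp [h]
  by_cases hbdd : BddAbove A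
  · obtain ⟨u, hmono, hlim, hmem⟩ := exists_seq_tendsto_sSup hne hbdd
    have hsub : A ⊆ (⋃ n, Set.Ioc q (u n)) ∪ (A ∩ {sSup A}) := by
      intro x hx
      rcases lt_or_eq_of_le (le_csSup hbdd hx) with hlt | heq
      · obtain ⟨n, hn⟩ := (hlim.eventually (eventually_gt_nhds hlt)).exists
        exact Or.inl (Set.mem_iUnion.2 ⟨n, hx.1, hn.le⟩)
      · exact Or.inr ⟨hx, heq⟩
    refine measure_mono_null hsub (measure_union_null (measure_iUnion_null fun n => (hmem n).2) ?_)
    by_cases hT : sSup A ∈ A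
    · refine measure_mono_null ?_ hT.2
      rintro z ⟨_, rfl⟩
      exact ⟨hT.1, le_refl _⟩
    · rw [show A ∩ {sSup A} = ∅ from by
        ext z; simp only [Set.mem_inter_iff, Set.mem_singleton_iff, Set.mem_empty_iff_false, iff_false]
        rintro ⟨hz, rfl⟩; exact hT hz]
      simp
  · have h1 : ∀ n : ℕ, ∃ x ∈ A, (n:ℝ) < x := fun n => not_bddAbove_iff.mp hbdd n
    choose u hu hlt using h1
    have hsub : A ⊆ ⋃ n, Set.Ioc q (u n) := fun x hx => by
      obtain ⟨n, hn⟩ := exists_nat_gt x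
      exact Set.mem_iUnion.2 ⟨n, hx.1, (hn.trans (hlt n)).le⟩
    exact measure_mono_null hsub (measure_iUnion_null fun n => (hu n).2)

lemma aux_Ico_null (μ : Measure ℝ) (q : ℝ) :
    μ {x | x < q ∧ μ (Set.Ico x q) = 0} = 0 := by
  set A := {x : ℝ | x < q ∧ μ (Set.Ico x q) = 0} with hA
  rcases A.eq_empty_or_nonempty with h | hne
  · simp [h]
  by_cases hbdd : BddBelow A
  · obtain ⟨u, hmono, hlim, hmem⟩ := exists_seq_tendsto_sInf hne hbdd
    have hsub : A ⊆ (⋃ n, Set.Ico (u n) q) ∪ (A ∩ {sInf A}) := by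
      intro x hx
      rcases lt_or_eq_of_le (csInf_le hbdd hx) with hlt | heq
      · obtain ⟨n, hn⟩ := (hlim.eventually (eventually_lt_nhds hlt)).exists
        exact Or.inl (Set.mem_iUnion.2 ⟨n, hn.le, hx.1⟩)
      · exact Or.inr ⟨hx, heq.symm⟩
    refine measure_mono_null hsub (measure_union_null (measure_iUnion_null fun n => (hmem n).2) ?_)
    by_cases hT : sInf A ∈ A
    · refine measure_mono_null ?_ hT.2
      rintro z ⟨_, rfl⟩
      exact ⟨le_refl _, hT.1⟩
    · rw [show A ∩ {sInf A} = ∅ from by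
        ext z; simp only [Set.mem_inter_iff, Set.mem_singleton_iff, Set.mem_empty_iff_false, iff_false]
        rintro ⟨hz, rfl⟩; exact hT hz]
      simp
  · have h1 : ∀ n : ℕ, ∃ x ∈ A, x < -(n:ℝ) := fun n => not_bddBelow_iff.mp hbdd (-(n:ℝ))
    choose u hu hlt using h1
    have hsub : A ⊆ ⋃ n, Set.Ico (u n) q := fun x hx => by
      obtain ⟨n, hn⟩ := exists_nat_gt (-x)
      exact Set.mem_iUnion.2 ⟨n, ((hlt n).trans (by linarith)).le, hx.1⟩
    exact measure_mono_null hsub (measure_iUnion_null fun n => (hu n).2)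

lemma aux_Ici_null (μ : Measure ℝ) :
    μ {x | μ (Set.Ici x) = 0} = 0 := by
  set A := {x : ℝ | μ (Set.Ici x) = 0} with hA
  rcases A.eq_empty_or_nonempty with h | hne
  · simp [h]
  by_cases hbdd : BddBelow A
  · obtain ⟨u, hmono, hlim, hmem⟩ := exists_seq_tendsto_sInf hne hbdd
    have hsub : A ⊆ (⋃ n, Set.Ici (u n)) ∪ (A ∩ {sInf A}) := by
      intro x hx
      rcases lt_or_eq_of_le (csInf_le hbdd hx) with hlt | heq
      · obtain ⟨n, hn⟩ := (hlim.eventually (eventually_lt_nhds hlt)).exists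
        exact Or.inl (Set.mem_iUnion.2 ⟨n, hn.le⟩)
      · exact Or.inr ⟨hx, heq.symm⟩
    refine measure_mono_null hsub (measure_union_null (measure_iUnion_null fun n => hmem n) ?_)
    by_cases hT : sInf A ∈ A
    · refine measure_mono_null ?_ hT
      rintro z ⟨_, rfl⟩
      exact Set.self_mem_Ici
    · rw [show A ∩ {sInf A} = ∅ from by
        ext z; simp only [Set.mem_inter_iff, Set.mem_singleton_iff, Set.mem_empty_iff_false, iff_false]
        rintro ⟨hz, rfl⟩; exact hT hz]
      simp
  · have h1 : ∀ n : ℕ, ∃ x ∈ A, x < -(n:ℝ) := fun n => not_bddBelow_iff.mp hbdd (-(n:ℝ))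
    choose u hu hlt using h1
    have hsub : A ⊆ ⋃ n, Set.Ici (u n) := fun x hx => by
      obtain ⟨n, hn⟩ := exists_nat_gt (-x)
      exact Set.mem_iUnion.2 ⟨n, ((hlt n).trans (by linarith)).le⟩
    exact measure_mono_null hsub (measure_iUnion_null fun n => hu n)

lemma aux_Iic_null (μ : Measure ℝ) :
    μ {x | μ (Set.Iic x) = 0} = 0 := by
  set A := {x : ℝ | μ (Set.Iic x) = 0} with hA
  rcases A.eq_empty_or_nonempty with h | hne
  · simp [h]
  by_cases hbdd : BddAbove A
  · obtain ⟨u, hmono, hlim, hmem⟩ := exists_seq_tendsto_sSup hne hbdd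
    have hsub : A ⊆ (⋃ n, Set.Iic (u n)) ∪ (A ∩ {sSup A}) := by
      intro x hx
      rcases lt_or_eq_of_le (le_csSup hbdd hx) with hlt | heq
      · obtain ⟨n, hn⟩ := (hlim.eventually (eventually_gt_nhds hlt)).exists
        exact Or.inl (Set.mem_iUnion.2 ⟨n, hn.le⟩)
      · exact Or.inr ⟨hx, heq⟩
    refine measure_mono_null hsub (measure_union_null (measure_iUnion_null fun n => hmem n) ?_)
    by_cases hT : sSup A ∈ A
    · refine measure_mono_null ?_ hT
      rintro z ⟨_, rfl⟩
      exact Set.self_mem_Iic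
    · rw [show A ∩ {sSup A} = ∅ from by
        ext z; simp only [Set.mem_inter_iff, Set.mem_singleton_iff, Set.mem_empty_iff_false, iff_false]
        rintro ⟨hz, rfl⟩; exact hT hz]
      simp
  · have h1 : ∀ n : ℕ, ∃ x ∈ A, (n:ℝ) < x := fun n => not_bddAbove_iff.mp hbdd n
    choose u hu hlt using h1
    have hsub : A ⊆ ⋃ n, Set.Iic (u n) := fun x hx => by
      obtain ⟨n, hn⟩ := exists_nat_gt x
      exact Set.mem_iUnion.2 ⟨n, (hn.trans (hlt n)).le⟩
    exact measure_mono_null hsub (measure_iUnion_null fun n => hu n)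

lemma Tplus_null (μ : Measure ℝ) :
    μ {x | 0 < x ∧ ∃ y, y < x ∧ μ (Set.Ioc y x) = 0} = 0 := by
  refine measure_mono_null (fun x hx => ?_)
    (measure_iUnion_null (fun q : ℚ => aux_Ioc_null μ q))
  obtain ⟨hx0, y, hyx, hnull⟩ := hx
  obtain ⟨q, hq1, hq2⟩ := exists_rat_btwn hyx
  exact Set.mem_iUnion.2 ⟨q, hq2, measure_mono_null (Set.Ioc_subset_Ioc_left hq1.le) hnull⟩

lemma Tminus_null (μ : Measure ℝ) :
    μ {x | x < 0 ∧ ∃ y, x < y ∧ μ (Set.Ico x y) = 0} = 0 := by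
  refine measure_mono_null (fun x hx => ?_)
    (measure_iUnion_null (fun q : ℚ => aux_Ico_null μ q))
  obtain ⟨hx0, y, hxy, hnull⟩ := hx
  obtain ⟨q, hq1, hq2⟩ := exists_rat_btwn hxy
  exact Set.mem_iUnion.2 ⟨q, hq1, measure_mono_null (Set.Ico_subset_Ico_right hq2.le) hnull⟩

end Aux

/-- Lemma `0excep` of the paper: almost surely, either `X = 0`
or `(X, U_X) ∈ 𝒢`. -/
theorem ae_mem_Gset
    (P : Measure Ω) [IsProbabilityMeasure P] (X U : Ω → ℝ)
    (hXm : Measurable X) (hUm : Measurable U)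
    (hXint : Integrable X P) (hXmean : ∫ ω, X ω ∂P = 0)
    (hX0 : P {ω | X ω = 0} ≠ 1)
    (hU : IsUniform01 P U) (hindep : IndepFun X U P) :
    P {ω | X ω ≠ 0 ∧ (X ω, UX P X U ω) ∉ Gset P X} = 0 := by
  classical
  set μ := P.map X with hμ
  -- E1 : U lands in (0,1) a.s.
  have hE1 : P {ω | U ω ∉ Set.Ioo (0:ℝ) 1} = 0 := by
    have h1 : P {ω | U ω ∉ Set.Ioo (0:ℝ) 1} = P.map U ((Set.Ioo (0:ℝ) 1)ᶜ) := by
      rw [Measure.map_apply hUm measurableSet_Ioo.compl]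
      rfl
    have hU' : P.map U = volume.restrict (Set.Icc (0:ℝ) 1) := hU
    rw [h1, hU', Measure.restrict_apply measurableSet_Ioo.compl]
    have h2 : (Set.Ioo (0:ℝ) 1)ᶜ ∩ Set.Icc (0:ℝ) 1 = {0, 1} := by
      rw [Set.inter_comm, ← Set.diff_eq, Set.Icc_diff_Ioo_same zero_le_one]
    rw [h2, Set.insert_eq]
    exact measure_union_null Real.volume_singleton Real.volume_singleton
  -- E2 : positive part, Mplus
  have hE2 : P {ω | 0 < X ω ∧ X ω ∉ Mplus P X} = 0 := by
    have hT := Tplus_null μ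
    refine measure_mono_null (fun ω hω => ?_) (le_zero_iff.mp (hT ▸ Measure.le_map_apply hXm.aemeasurable _))
    obtain ⟨hpos, hnm⟩ := hω
    refine Set.mem_preimage.2 ⟨hpos, ?_⟩
    simp only [Mplus, Set.mem_setOf_eq, not_and] at hnm
    push_neg at hnm
    obtain ⟨y, hy, hle⟩ := hnm hpos
    refine ⟨y, hy, ?_⟩
    rw [hμ, Measure.map_apply hXm measurableSet_Ioc]
    exact le_zero_iff.mp hle
  -- E3 : negative part, Mminus
  have hE3 : P {ω | X ω < 0 ∧ X ω ∉ Mminus P X} = 0 := by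
    have hT := Tminus_null μ
    refine measure_mono_null (fun ω hω => ?_) (le_zero_iff.mp (hT ▸ Measure.le_map_apply hXm.aemeasurable _))
    obtain ⟨hneg, hnm⟩ := hω
    refine Set.mem_preimage.2 ⟨hneg, ?_⟩
    simp only [Mminus, Set.mem_setOf_eq, not_and] at hnm
    push_neg at hnm
    obtain ⟨y, hy, hle⟩ := hnm hneg
    refine ⟨y, hy, ?_⟩
    rw [hμ, Measure.map_apply hXm measurableSet_Ico]
    exact le_zero_iff.mp hle
  -- E4 : no mass at or above
  have hE4 : P {ω | P {ω' | X ω < X ω'} = 0 ∧ P {ω' | X ω' = X ω} = 0} = 0 := by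
    have hT := aux_Ici_null μ
    refine measure_mono_null (fun ω hω => ?_) (le_zero_iff.mp (hT ▸ Measure.le_map_apply hXm.aemeasurable _))
    obtain ⟨h1, h2⟩ := hω
    refine Set.mem_preimage.2 ?_
    show μ (Set.Ici (X ω)) = 0
    have hsub : Set.Ici (X ω) ⊆ {X ω} ∪ Set.Ioi (X ω) := fun z hz =>
      hz.lt_or_eq.elim (fun h => Or.inr h) (fun h => Or.inl h.symm)
    refine measure_mono_null hsub (measure_union_null ?_ ?_)
    · rw [hμ, Measure.map_apply hXm (measurableSet_singleton _)]
      exact h2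
    · rw [hμ, Measure.map_apply hXm measurableSet_Ioi]
      exact h1
  -- E5 : no mass at or below
  have hE5 : P {ω | P {ω' | X ω' < X ω} = 0 ∧ P {ω' | X ω' = X ω} = 0} = 0 := by
    have hT := aux_Iic_null μ
    refine measure_mono_null (fun ω hω => ?_) (le_zero_iff.mp (hT ▸ Measure.le_map_apply hXm.aemeasurable _))
    obtain ⟨h1, h2⟩ := hω
    refine Set.mem_preimage.2 ?_
    show μ (Set.Iic (X ω)) = 0
    have hsub : Set.Iic (X ω) ⊆ {X ω} ∪ Set.Iio (X ω) := fun z hz =>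
      hz.lt_or_eq.elim (fun h => Or.inr h) (fun h => Or.inl h)
    refine measure_mono_null hsub (measure_union_null ?_ ?_)
    · rw [hμ, Measure.map_apply hXm (measurableSet_singleton _)]
      exact h2
    · rw [hμ, Measure.map_apply hXm measurableSet_Iio]
      exact h1
  -- combine
  refine measure_mono_null (fun ω hω => ?_)
    (measure_union_null (measure_union_null (measure_union_null (measure_union_null hE1 hE2) hE3) hE4) hE5)
  obtain ⟨hX0, hnG⟩ := hω
  by_contra hc
  simp only [Set.mem_union, Set.mem_setOf_eq, not_or] at hc
  obtain ⟨⟨⟨⟨h1, h2⟩, h3⟩, h4⟩, h5⟩ := hc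
  have hUmem : U ω ∈ Set.Ioo (0:ℝ) 1 := not_not.mp h1
  apply hnG
  rcases hX0.lt_or_gt with hneg | hpos
  · -- Gminus
    right
    have hM : X ω ∈ Mminus P X := not_not.mp (fun hn => h3 ⟨hneg, hn⟩)
    by_cases hatom : P {ω' | X ω' = X ω} = 0
    · have hUX : UX P X U ω = 1 := by simp [UX, hatom]
      refine ⟨hM, ?_, ?_, ?_, ?_, ?_⟩
      · rw [hUX]; exact zero_le_one
      · rw [hUX]
      · intro _; exact hUX
      · intro _; rw [hUX]; exact zero_lt_one
      · intro hlow
        exact absurd ⟨hlow, hatom⟩ h5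
    · have hUX : UX P X U ω = U ω := by simp [UX, hatom]
      refine ⟨hM, ?_, ?_, ?_, ?_, ?_⟩
      · rw [hUX]; exact hUmem.1.le
      · rw [hUX]; exact hUmem.2.le
      · intro hN; exact absurd hN.2 hatom
      · intro _; rw [hUX]; exact hUmem.1
      · intro _
        exact ⟨fun hN => hatom hN.2, by rw [hUX]; exact hUmem.2⟩
  · -- Gplus
    left
    have hM : X ω ∈ Mplus P X := not_not.mp (fun hn => h2 ⟨hpos, hn⟩)
    by_cases hatom : P {ω' | X ω' = X ω} = 0
    · have hUX : UX P X U ω = 1 := by simp [UX, hatom]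
      refine ⟨hM, ?_, ?_, ?_, ?_, ?_⟩
      · rw [hUX]; exact zero_le_one
      · rw [hUX]
      · intro _; exact hUX
      · intro _; rw [hUX]; exact zero_lt_one
      · intro hhigh
        exact absurd ⟨hhigh, hatom⟩ h4
    · have hUX : UX P X U ω = U ω := by simp [UX, hatom]
      refine ⟨hM, ?_, ?_, ?_, ?_, ?_⟩
      · rw [hUX]; exact hUmem.1.le
      · rw [hUX]; exact hUmem.2.le
      · intro hN; exact absurd hN.2 hatom
      · intro _; rw [hUX]; exact hUmem.1
      · intro _
        exact ⟨fun hN => hatom hN.2, by rw [hUX]; exact hUmem.2⟩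

end PinelisTtest
end
end
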